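/- arXiv:2302.06191 — 3 statements merged into one kernel-verified Lean document; each statement's English description precedes it below -/
import Mathlib

section
/- Under the geometric Wasserstein convergence hypothesis (uniform in the initial measure), for every Hölder continuous g: X → ℂ with E_{ν_inv}(g) = 0, the Poisson equation (Id − Π)g̃ = g admits a continuous solution g̃, and any two continuous solutions differ by an additive constant. -/
open MeasureTheory

/-- The `n`-step action of a Markov kernel on measures: `ν ↦ ν Π^n`. -/
noncomputable def iterKer {X : Type*} [MeasurableSpace X] (K : X → Measure X) :
    ℕ → Measure X → Measure X
  | 0, ν => ν
  | n + 1, ν => (iterKer K n ν).bind K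

/-- Wasserstein-1 distance via couplings. -/
noncomputable def W1 {X : Type*} [MeasurableSpace X] [PseudoMetricSpace X]
    (P Q : Measure X) : ℝ :=
  sInf {r | ∃ π : Measure (X × X), π.map Prod.fst = P ∧ π.map Prod.snd = Q ∧
    r = ∫ p, dist p.1 p.2 ∂π}

/-!
Let `P` be the Markov operator on `C(X, ℂ)` and `B_n` the average of `P^(mn), …, P^(mn+m-1)`.
The averaged partial sums `A_n = (1/m) ∑_{r<m} ∑_{k<mn+r} P^k g` satisfy `A_n - P A_n = g - B_n g`,
and `A_(n+1) - A_n` is the sum of the `m` vectors `B_n (P^j g)`. At a point `x`, `B_n (P^j g) x` is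
the integral of `g` against the averaged law at times `mn + r` of the chain started from
`Π^j(x, ·)`, minus its `ν_inv`-mean; coupling this law with `ν_inv` and applying Jensen to the
concave `t ↦ t^α` bounds it by a multiple of `(C λ^n)^α`, uniformly in `x`, `j`. So `A_n` converges
uniformly, and its limit solves the Poisson equation because `P` is continuous. Two continuous
solutions differ by a continuous harmonic function, which is constant by assumption.
-/

open ProbabilityTheory Filter Topology Finset

section PoissonEquation

variable {𝕜 E : Type*} [RCLike 𝕜] [NormedAddCommGroup E] [NormedSpace 𝕜 E]
  (T : E →L[𝕜] E) (m : ℕ)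

noncomputable def blockAverage (n : ℕ) : E →L[𝕜] E :=
  (m : 𝕜)⁻¹ • ∑ r ∈ range m, T ^ (m * n + r)

noncomputable def averagedPartialSum (g : E) (n : ℕ) : E :=
  (m : 𝕜)⁻¹ • ∑ r ∈ range m, ∑ k ∈ range (m * n + r), (T ^ k) g

lemma commute_pow_blockAverage (j n : ℕ) : Commute (T ^ j) (blockAverage T m n) :=
  ((Commute.sum_right _ _ _ fun _ _ => Commute.pow_pow_self T j _).smul_right _)

lemma averagedPartialSum_sub_apply (hm : m ≠ 0) (g : E) (n : ℕ) :
    averagedPartialSum T m g n - T (averagedPartialSum T m g n) = g - blockAverage T m n g := by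
  have telescope : ∀ N, ∑ k ∈ range N, (T ^ k) g - T (∑ k ∈ range N, (T ^ k) g) =
      g - (T ^ N) g := by
    intro N
    simp only [map_sum, ← mul_apply_eq_comp, ← pow_succ', ← sum_sub_distrib, sum_range_sub',
      pow_zero, one_apply_eq_self]
  rw [averagedPartialSum, map_smul, map_sum, ← smul_sub, ← sum_sub_distrib]
  simp only [telescope, sum_sub_distrib, sum_const, card_range, blockAverage, smul_apply,
    _root_.sum_apply, smul_sub]
  rw [← Nat.cast_smul_eq_nsmul 𝕜, smul_smul, inv_mul_cancel₀ (by exact_mod_cast hm), one_smul]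

lemma averagedPartialSum_succ_sub (g : E) (n : ℕ) :
    averagedPartialSum T m g (n + 1) - averagedPartialSum T m g n =
      ∑ j ∈ range m, blockAverage T m n ((T ^ j) g) := by
  have block : ∀ r, ∑ k ∈ range (m * (n + 1) + r), (T ^ k) g - ∑ k ∈ range (m * n + r), (T ^ k) g
      = ∑ j ∈ range m, (T ^ (m * n + r)) ((T ^ j) g) := by
    intro r
    rw [← sum_Ico_eq_sub _ (by nlinarith), sum_Ico_eq_sum_range,
      show m * (n + 1) + r - (m * n + r) = m by rw [Nat.mul_succ]; omega]
    refine sum_congr rfl fun j _ => ?_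
    rw [← mul_apply_eq_comp, ← pow_add, add_right_comm]
  simp only [averagedPartialSum, blockAverage, ← smul_sub, ← sum_sub_distrib, block,
    smul_apply, _root_.sum_apply, ← smul_sum]
  rw [sum_comm]

theorem exists_sub_apply_eq_of_norm_blockAverage_le [CompleteSpace E] (hm : m ≠ 0) {g : E}
    {c q : ℝ} (hq0 : 0 ≤ q) (hq1 : q < 1)
    (hbound : ∀ n j, ‖blockAverage T m n ((T ^ j) g)‖ ≤ c * q ^ n) :
    ∃ h : E, h - T h = g := by
  have hcauchy : CauchySeq (averagedPartialSum T m g) := by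
    refine cauchySeq_of_le_geometric q (m * c) hq1 fun n => ?_
    rw [dist_comm, dist_eq_norm, averagedPartialSum_succ_sub]
    calc ‖∑ j ∈ range m, blockAverage T m n ((T ^ j) g)‖
        ≤ ∑ j ∈ range m, c * q ^ n := norm_sum_le_of_le _ fun j _ => hbound n j
      _ = m * c * q ^ n := by simp [mul_assoc]
  obtain ⟨h, hh⟩ := cauchySeq_tendsto_of_complete hcauchy
  refine ⟨h, tendsto_nhds_unique ((hh.sub (T.continuous.tendsto h |>.comp hh))) ?_⟩
  have hdecay : Tendsto (fun n => blockAverage T m n g) atTop (𝓝 0) := by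
    refine squeeze_zero_norm (fun n => by simpa using hbound n 0) ?_
    simpa using (tendsto_pow_atTop_nhds_zero_of_lt_one hq0 hq1).const_mul c
  simpa [Function.comp_def, averagedPartialSum_sub_apply T m hm] using
    (tendsto_const_nhds (x := g)).sub hdecay

end PoissonEquation

lemma Continuous.integrable_of_compactSpace {Y E : Type*} [TopologicalSpace Y] [CompactSpace Y]
    [MeasurableSpace Y] [OpensMeasurableSpace Y] [NormedAddCommGroup E] {μ : Measure Y}
    [IsFiniteMeasure μ] {f : Y → E} (hf : Continuous f) : Integrable f μ :=
  hf.integrable_of_hasCompactSupport (.of_compactSpace f)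

lemma MeasureTheory.Measure.integral_bind_kernel {Y Z E : Type*} [MeasurableSpace Y]
    [MeasurableSpace Z] [NormedAddCommGroup E] [NormedSpace ℝ E] (μ : Measure Y) (κ : Kernel Y Z)
    {f : Z → E} (hf : Integrable f (μ.bind κ)) :
    ∫ z, f z ∂(μ.bind κ) = ∫ y, ∫ z, f z ∂κ y ∂μ := by
  rw [Measure.comp_eq_comp_const_apply] at hf ⊢
  exact Kernel.integral_comp hf

instance isProbabilityMeasure_iterKer {X : Type*} [MeasurableSpace X] (κ : Kernel X X)
    [IsMarkovKernel κ] (n : ℕ) (ν : Measure X) [IsProbabilityMeasure ν] :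
    IsProbabilityMeasure (iterKer κ n ν) := by
  induction n with
  | zero => assumption
  | succ n ih => exact isProbabilityMeasure_bind κ.aemeasurable (ae_of_all _ inferInstance)

lemma isProbabilityMeasure_inv_smul_sum {X : Type*} [MeasurableSpace X] {m : ℕ} (hm : m ≠ 0)
    (μ : ℕ → Measure X) [∀ r, IsProbabilityMeasure (μ r)] :
    IsProbabilityMeasure ((m : ENNReal)⁻¹ • ∑ r ∈ range m, μ r) := by
  constructor
  simp only [Measure.smul_apply, Measure.coe_finsetSum, Finset.sum_apply, measure_univ, sum_const,
    card_range, nsmul_eq_mul, mul_one, smul_eq_mul]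
  exact ENNReal.inv_mul_cancel (by exact_mod_cast hm) (ENNReal.natCast_ne_top m)

namespace ProbabilityTheory.Kernel

variable {X : Type*} [TopologicalSpace X] [CompactSpace X] [MeasurableSpace X]
  [OpensMeasurableSpace X]

def IsFeller (κ : Kernel X X) : Prop :=
  ∀ f : X → ℂ, Continuous f → Continuous fun x => ∫ y, f y ∂κ x

variable {κ : Kernel X X}

lemma exists_eq_add_const_of_sub_integral_eq [IsFiniteKernel κ]
    (hconst : ∀ f : X → ℂ, Continuous f → (∀ x, ∫ y, f y ∂κ x = f x) → ∀ x y, f x = f y)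
    {f₁ f₂ g : X → ℂ} (hf₁ : Continuous f₁) (hf₂ : Continuous f₂)
    (h₁ : ∀ x, f₁ x - ∫ y, f₁ y ∂κ x = g x) (h₂ : ∀ x, f₂ x - ∫ y, f₂ y ∂κ x = g x) :
    ∃ c, ∀ x, f₁ x = f₂ x + c := by
  have harmonic : ∀ x, ∫ y, f₁ y - f₂ y ∂κ x = f₁ x - f₂ x := fun x => by
    rw [integral_sub hf₁.integrable_of_compactSpace hf₂.integrable_of_compactSpace]
    linear_combination h₂ x - h₁ x
  rcases isEmpty_or_nonempty X with hX | ⟨⟨x₀⟩⟩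
  · exact ⟨0, hX.elim⟩
  · refine ⟨f₁ x₀ - f₂ x₀, fun x => ?_⟩
    linear_combination hconst (fun y => f₁ y - f₂ y) (hf₁.sub hf₂) harmonic x x₀

variable [IsMarkovKernel κ]

noncomputable def markovOperator (hκ : κ.IsFeller) : C(X, ℂ) →L[ℂ] C(X, ℂ) :=
  LinearMap.mkContinuous
    { toFun := fun f => ⟨fun x => ∫ y, f y ∂κ x, hκ f f.continuous⟩
      map_add' := fun f g => by
        ext x
        exact integral_add f.continuous.integrable_of_compactSpace
          g.continuous.integrable_of_compactSpace
      map_smul' := fun c f => by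
        ext x
        exact integral_smul c f }
    1 fun f => by
      rw [one_mul, ContinuousMap.norm_le _ (norm_nonneg f)]
      intro x
      simpa using norm_integral_le_of_norm_le_const (μ := κ x)
        (ae_of_all _ fun y => f.norm_coe_le_norm y)

variable (hκ : κ.IsFeller)

lemma integral_iterKer (f : C(X, ℂ)) (k : ℕ) (ν : Measure X) [IsProbabilityMeasure ν] :
    ∫ y, f y ∂(iterKer κ k ν) = ∫ x, (markovOperator hκ ^ k) f x ∂ν := by
  induction k generalizing f with
  | zero => rfl
  | succ k ih =>
    rw [iterKer, Measure.integral_bind_kernel _ _ f.continuous.integrable_of_compactSpace,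
      pow_succ, mul_apply_eq_comp, ← ih]
    rfl

lemma integral_inv_smul_sum_iterKer (f : C(X, ℂ)) (m n : ℕ) (ν : Measure X)
    [IsProbabilityMeasure ν] :
    ∫ y, f y ∂((m : ENNReal)⁻¹ • ∑ r ∈ range m, iterKer κ (m * n + r) ν) =
      ∫ x, blockAverage (markovOperator hκ) m n f x ∂ν := by
  have hint : ∀ k, Integrable (fun x => (markovOperator hκ ^ k) f x) ν :=
    fun k => ((markovOperator hκ ^ k) f).continuous.integrable_of_compactSpace
  rw [integral_smul_measure, integral_finsetSum_measure
    fun r _ => f.continuous.integrable_of_compactSpace]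
  simp only [blockAverage, smul_apply, _root_.sum_apply, ContinuousMap.smul_apply,
    ContinuousMap.sum_apply, integral_smul, integral_finsetSum _ fun k _ => hint _,
    integral_iterKer hκ]
  simp [ENNReal.toReal_inv, Complex.real_smul]

lemma blockAverage_markovOperator_pow_apply (f : C(X, ℂ)) (m n j : ℕ) (x : X) :
    blockAverage (markovOperator hκ) m n ((markovOperator hκ ^ j) f) x =
      ∫ y, f y ∂((m : ENNReal)⁻¹ • ∑ r ∈ range m, iterKer κ (m * n + r)
        (iterKer κ j (Measure.dirac x))) := by
  rw [integral_inv_smul_sum_iterKer hκ, integral_iterKer hκ,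
    integral_dirac' _ _ (ContinuousMap.continuous _).stronglyMeasurable, ← mul_apply_eq_comp,
    ← mul_apply_eq_comp, (commute_pow_blockAverage _ m j n).eq]

end ProbabilityTheory.Kernel

lemma continuous_of_norm_sub_le_mul_rpow {X E : Type*} [PseudoMetricSpace X]
    [SeminormedAddCommGroup E] {f : X → E} {L α : ℝ} (hα : 0 < α)
    (hf : ∀ x y, ‖f x - f y‖ ≤ L * dist x y ^ α) : Continuous f := by
  refine continuous_iff_continuousAt.2 fun x => tendsto_iff_norm_sub_tendsto_zero.2 ?_
  refine squeeze_zero (fun _ => norm_nonneg _) (fun y => hf y x) ?_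
  have hcont : Continuous fun y => L * dist y x ^ α :=
    continuous_const.mul ((continuous_id.dist continuous_const).rpow_const fun _ => .inr hα.le)
  simpa [Real.zero_rpow hα.ne'] using hcont.tendsto x

lemma W1_nonneg {X : Type*} [MeasurableSpace X] [PseudoMetricSpace X] (P Q : Measure X) :
    0 ≤ W1 P Q :=
  Real.sInf_nonneg fun _ ⟨_, _, _, hr⟩ => hr ▸ integral_nonneg fun _ => dist_nonneg

section Wasserstein

variable {X E : Type*} [MetricSpace X] [CompactSpace X] [MeasurableSpace X] [BorelSpace X]
  [NormedAddCommGroup E] [NormedSpace ℝ E] {g : X → E} {L α : ℝ}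

lemma norm_integral_sub_le_of_coupling (hL : 0 ≤ L) (hα0 : 0 < α) (hα1 : α ≤ 1)
    (hg : ∀ x y, ‖g x - g y‖ ≤ L * dist x y ^ α) {P Q : Measure X} [IsProbabilityMeasure P]
    {π : Measure (X × X)} (hπP : π.map Prod.fst = P) (hπQ : π.map Prod.snd = Q) :
    ‖∫ x, g x ∂P - ∫ x, g x ∂Q‖ ≤ L * (∫ p, dist p.1 p.2 ∂π) ^ α := by
  subst hπP hπQ
  have : IsProbabilityMeasure π := Measure.isProbabilityMeasure_of_map Prod.fst
  have hgc := continuous_of_norm_sub_le_mul_rpow hα0 hg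
  have hdist : Continuous fun p : X × X => dist p.1 p.2 := continuous_dist
  have hdistα : Continuous fun p : X × X => dist p.1 p.2 ^ α :=
    hdist.rpow_const fun _ => .inr hα0.le
  have jensen : ∫ p, dist p.1 p.2 ^ α ∂π ≤ (∫ p, dist p.1 p.2 ∂π) ^ α :=
    (Real.concaveOn_rpow hα0.le hα1).le_map_integral
      (Real.continuous_rpow_const hα0.le).continuousOn isClosed_Ici
      (ae_of_all _ fun _ => dist_nonneg) hdist.integrable_of_compactSpace
      hdistα.integrable_of_compactSpace
  rw [integral_map measurable_fst.aemeasurable hgc.aestronglyMeasurable,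
    integral_map measurable_snd.aemeasurable hgc.aestronglyMeasurable,
    ← integral_sub (hgc.fst'.integrable_of_compactSpace (E := E))
      hgc.snd'.integrable_of_compactSpace]
  calc ‖∫ p, g p.1 - g p.2 ∂π‖
      ≤ ∫ p, L * dist p.1 p.2 ^ α ∂π :=
        norm_integral_le_of_norm_le (hdistα.integrable_of_compactSpace.const_mul L)
          (ae_of_all _ fun p => hg p.1 p.2)
    _ ≤ L * (∫ p, dist p.1 p.2 ∂π) ^ α := by
        rw [integral_const_mul]
        exact mul_le_mul_of_nonneg_left jensen hL

lemma norm_integral_sub_le_mul_W1_rpow (hL : 0 ≤ L) (hα0 : 0 < α) (hα1 : α ≤ 1)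
    (hg : ∀ x y, ‖g x - g y‖ ≤ L * dist x y ^ α) (P Q : Measure X) [IsProbabilityMeasure P]
    [IsProbabilityMeasure Q] :
    ‖∫ x, g x ∂P - ∫ x, g x ∂Q‖ ≤ L * W1 P Q ^ α := by
  set couplingCosts := {r | ∃ π : Measure (X × X), π.map Prod.fst = P ∧ π.map Prod.snd = Q ∧
    r = ∫ p, dist p.1 p.2 ∂π}
  have hne : couplingCosts.Nonempty := ⟨_, P.prod Q, Measure.fst_prod, Measure.snd_prod, rfl⟩
  have hbdd : BddBelow couplingCosts := ⟨0, by
    rintro _ ⟨π, -, -, rfl⟩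
    exact integral_nonneg fun _ => dist_nonneg⟩
  have hclosed : IsClosed {r : ℝ | ‖∫ x, g x ∂P - ∫ x, g x ∂Q‖ ≤ L * r ^ α} :=
    isClosed_le continuous_const (continuous_const.mul (Real.continuous_rpow_const hα0.le))
  refine closure_minimal ?_ hclosed (csInf_mem_closure hne hbdd)
  rintro _ ⟨π, hπP, hπQ, rfl⟩
  exact norm_integral_sub_le_of_coupling hL hα0 hα1 hg hπP hπQ

end Wasserstein

theorem poisson_equation_continuous_solution_general {X : Type*} [MetricSpace X] [CompactSpace X]
    [MeasurableSpace X] [BorelSpace X]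
    (K : X → Measure X) (hKprob : ∀ x, IsProbabilityMeasure (K x)) (hKmeas : Measurable K)
    (hFeller : ∀ f : X → ℂ, Continuous f → Continuous fun x => ∫ y, f y ∂(K x))
    (νinv : Measure X) (hνinv : IsProbabilityMeasure νinv)
    (m : ℕ) (hm : 1 ≤ m) (C lam : ℝ) (hC : 0 < C) (hlam0 : 0 < lam) (hlam1 : lam < 1)
    (hW : ∀ ν : Measure X, IsProbabilityMeasure ν → ∀ n : ℕ,
      W1 (((m : ENNReal))⁻¹ • ∑ r ∈ Finset.range m, iterKer K (m * n + r) ν) νinv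
        ≤ C * lam ^ n)
    (hconst : ∀ f : X → ℂ, Continuous f → (∀ x, ∫ y, f y ∂(K x) = f x) → ∀ x y, f x = f y)
    (g : X → ℂ) (α Kg : ℝ) (hα0 : 0 < α) (hα1 : α ≤ 1)
    (hg : ∀ x y, ‖g x - g y‖ ≤ Kg * dist x y ^ α)
    (hgcentered : ∫ x, g x ∂νinv = 0) :
    (∃ gt : X → ℂ, Continuous gt ∧ ∀ x, gt x - ∫ y, gt y ∂(K x) = g x) ∧
    (∀ gt₁ gt₂ : X → ℂ, Continuous gt₁ → Continuous gt₂ →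
      (∀ x, gt₁ x - ∫ y, gt₁ y ∂(K x) = g x) → (∀ x, gt₂ x - ∫ y, gt₂ y ∂(K x) = g x) →
      ∃ c : ℂ, ∀ x, gt₁ x = gt₂ x + c) := by
  obtain ⟨L, hL, hgL⟩ : ∃ L, 0 ≤ L ∧ ∀ x y, ‖g x - g y‖ ≤ L * dist x y ^ α :=
    ⟨max Kg 0, le_max_right _ _, fun x y => (hg x y).trans (by gcongr; exact le_max_left _ _)⟩
  let κ : Kernel X X := ⟨K, hKmeas⟩
  have : IsMarkovKernel κ := ⟨hKprob⟩
  have hm0 : m ≠ 0 := by omega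
  let P := Kernel.markovOperator (κ := κ) hFeller
  let g' : C(X, ℂ) := ⟨g, continuous_of_norm_sub_le_mul_rpow hα0 hgL⟩
  have hdecay : ∀ n j, ‖blockAverage P m n ((P ^ j) g')‖ ≤ L * C ^ α * (lam ^ α) ^ n := by
    intro n j
    refine (ContinuousMap.norm_le _ (by positivity)).2 fun x => ?_
    set ν := iterKer κ j (.dirac x)
    set μ := ((m : ENNReal))⁻¹ • ∑ r ∈ range m, iterKer κ (m * n + r) ν
    have : IsProbabilityMeasure μ := isProbabilityMeasure_inv_smul_sum hm0 _
    calc ‖blockAverage P m n ((P ^ j) g') x‖ = ‖∫ y, g y ∂μ - ∫ y, g y ∂νinv‖ := by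
          rw [hgcentered, sub_zero]
          exact congrArg norm
            (Kernel.blockAverage_markovOperator_pow_apply (κ := κ) hFeller g' m n j x)
      _ ≤ L * W1 μ νinv ^ α := norm_integral_sub_le_mul_W1_rpow hL hα0 hα1 hgL _ _
      _ ≤ L * (C * lam ^ n) ^ α := by
          gcongr
          · exact W1_nonneg _ _
          · exact hW ν inferInstance n
      _ = L * C ^ α * (lam ^ α) ^ n := by
          rw [Real.mul_rpow hC.le (by positivity), Real.rpow_pow_comm hlam0.le]; ring
  obtain ⟨h, hh⟩ := exists_sub_apply_eq_of_norm_blockAverage_le P m hm0 (by positivity)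
    (Real.rpow_lt_one hlam0.le hlam1 hα0) hdecay
  exact ⟨⟨h, h.continuous, fun x => DFunLike.congr_fun hh x⟩,
    fun _ _ => Kernel.exists_eq_add_const_of_sub_integral_eq (κ := κ) hconst⟩

/-- Under the uniform geometric Wasserstein convergence hypothesis, for every
Hölder continuous `g` with `E_{ν_inv}(g) = 0`, the Poisson equation `(Id − Π) g̃ = g` has a
continuous solution, unique up to an additive constant among continuous solutions. -/
theorem poisson_equation_continuous_solution {X : Type*} [MetricSpace X] [CompactSpace X]
    [MeasurableSpace X] [BorelSpace X]
    (K : X → Measure X) (hKprob : ∀ x, IsProbabilityMeasure (K x)) (hKmeas : Measurable K)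
    (hFeller : ∀ f : X → ℂ, Continuous f → Continuous fun x => ∫ y, f y ∂(K x))
    (νinv : Measure X) (hνinv : IsProbabilityMeasure νinv) (hinv : νinv.bind K = νinv)
    (m : ℕ) (hm : 1 ≤ m) (C lam : ℝ) (hC : 0 < C) (hlam0 : 0 < lam) (hlam1 : lam < 1)
    (hW : ∀ ν : Measure X, IsProbabilityMeasure ν → ∀ n : ℕ,
      W1 (((m : ENNReal))⁻¹ • ∑ r ∈ Finset.range m, iterKer K (m * n + r) ν) νinv
        ≤ C * lam ^ n)
    (hconst : ∀ f : X → ℂ, Continuous f → (∀ x, ∫ y, f y ∂(K x) = f x) → ∀ x y, f x = f y)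
    (g : X → ℂ) (α Kg : ℝ) (hα0 : 0 < α) (hα1 : α ≤ 1)
    (hg : ∀ x y, ‖g x - g y‖ ≤ Kg * dist x y ^ α)
    (hgcentered : ∫ x, g x ∂νinv = 0) :
    (∃ gt : X → ℂ, Continuous gt ∧ ∀ x, gt x - ∫ y, gt y ∂(K x) = g x) ∧
    (∀ gt₁ gt₂ : X → ℂ, Continuous gt₁ → Continuous gt₂ →
      (∀ x, gt₁ x - ∫ y, gt₁ y ∂(K x) = g x) → (∀ x, gt₂ x - ∫ y, gt₂ y ∂(K x) = g x) →
      ∃ c : ℂ, ∀ x, gt₁ x = gt₂ x + c) :=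
  poisson_equation_continuous_solution_general K hKprob hKmeas hFeller νinv hνinv m hm C lam hC
    hlam0 hlam1 hW hconst g α Kg hα0 hα1 hg hgcentered
end

section
/- For a Markov chain with conditional increment variance E[(g̃(x̂_k) − Πg̃(x̂_{k−1}))² | J_{k−1}] = h(x̂_{k−1}) and Cesàro convergence νΠ^k-averages to ν_inv uniformly in ν (geometric in Wasserstein, with h Lipschitz-approximable), one has the uniform-in-shift convergence: lim_{n→∞} sup_{x̂} sup_{j ≥ 0} |(1/n) E_x̂[∑_{i=1}^n h(x̂_{j+i−1})] − E_{ν_inv}(h)| = 0. -/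
/-!
Approximate `h` uniformly within `ε / 2` by a Lipschitz function `f` (lattice Stone–Weierstrass:
Lipschitz functions are closed under `⊔`, `⊓` and interpolate any two values at two points).
Since `δ_x Π^j Π^i = δ_x Π^(j+i)`, the Cesàro average along the shift `j` is the Cesàro average
started from the probability measure `δ_x Π^j`, so the hypothesis bounds the error for `f` by
`C / n` uniformly in `x` and `j`, and replacing `f` by `h` costs at most `ε`.
-/

open MeasureTheory Filter Topology

section Lipschitz

variable {X : Type*} [MetricSpace X] [CompactSpace X]

theorem ContinuousMap.dense_setOf_lipschitzWith :
    Dense {f : C(X, ℝ) | ∃ K, LipschitzWith K f} := by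
  refine dense_iff_closure_eq.2 <| ContinuousMap.sublattice_closure_eq_top _
    ⟨0, 0, LipschitzWith.const 0⟩ ?_ ?_ ?_
  · rintro f ⟨Kf, hf⟩ g ⟨Kg, hg⟩
    exact ⟨max Kf Kg, hf.min hg⟩
  · rintro f ⟨Kf, hf⟩ g ⟨Kg, hg⟩
    exact ⟨max Kf Kg, hf.max hg⟩
  · intro v x y
    let a := (v y - v x) / dist x y
    have ha : LipschitzWith _ fun z => v x + a * dist x z :=
      (LipschitzWith.const (v x)).add ((lipschitzWith_smul a).comp (LipschitzWith.dist_right x))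
    refine ⟨⟨fun z => v x + a * dist x z, ha.continuous⟩, ⟨_, ha⟩, by simp, ?_⟩
    rcases eq_or_ne x y with rfl | hxy
    · simp
    · simp [a, dist_ne_zero.2 hxy]

theorem exists_lipschitzWith_abs_sub_le {h : X → ℝ} (hh : Continuous h) {δ : ℝ} (hδ : 0 < δ) :
    ∃ f : X → ℝ, ∃ K, LipschitzWith K f ∧ ∀ x, |h x - f x| ≤ δ := by
  obtain ⟨f, ⟨K, hf⟩, hhf⟩ :=
    ContinuousMap.dense_setOf_lipschitzWith.exists_dist_lt (⟨h, hh⟩ : C(X, ℝ)) hδ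
  exact ⟨f, K, hf, fun x => (ContinuousMap.dist_apply_le_dist x).trans hhf.le⟩

end Lipschitz

section iterKer

variable {X : Type*} [MeasurableSpace X]

theorem iterKer_iterKer (K : X → Measure X) (i j : ℕ) (ν : Measure X) :
    iterKer K i (iterKer K j ν) = iterKer K (j + i) ν := by
  induction i with
  | zero => rfl
  | succ i ih => exact congrArg (Measure.bind · K) ih

theorem isProbabilityMeasure_iterKer_s13 {K : X → Measure X}
    (hKprob : ∀ x, IsProbabilityMeasure (K x)) (hKmeas : Measurable K) (n : ℕ)
    (ν : Measure X) [IsProbabilityMeasure ν] : IsProbabilityMeasure (iterKer K n ν) := by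
  induction n with
  | zero => assumption
  | succ n ih =>
    constructor
    simp [iterKer, Measure.bind_apply MeasurableSet.univ hKmeas.aemeasurable]

end iterKer

theorem abs_integral_sub_integral_le {X : Type*} [TopologicalSpace X] [CompactSpace X]
    [MeasurableSpace X] [OpensMeasurableSpace X] (μ : Measure X) [IsProbabilityMeasure μ]
    {f g : X → ℝ} (hf : Continuous f) (hg : Continuous g) {δ : ℝ}
    (hfg : ∀ x, |f x - g x| ≤ δ) :
    |∫ x, f x ∂μ - ∫ x, g x ∂μ| ≤ δ := by
  rw [← integral_sub (hf.integrable_of_hasCompactSupport (.of_compactSpace f))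
    (hg.integrable_of_hasCompactSupport (.of_compactSpace g))]
  simpa using norm_integral_le_of_norm_le_const (μ := μ) (f := fun x => f x - g x)
    (.of_forall hfg)

theorem abs_cesaro_sub_cesaro_le {a b : ℕ → ℝ} {δ : ℝ} (hδ : 0 ≤ δ) (n : ℕ)
    (hab : ∀ i < n, |a i - b i| ≤ δ) :
    |(n : ℝ)⁻¹ * ∑ i ∈ Finset.range n, a i - (n : ℝ)⁻¹ * ∑ i ∈ Finset.range n, b i| ≤ δ := by
  rw [← mul_sub, ← Finset.sum_sub_distrib, abs_mul, abs_inv, Nat.abs_cast]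
  have hsum : |∑ i ∈ Finset.range n, (a i - b i)| ≤ n * δ := by
    simpa using (Finset.abs_sum_le_sum_abs _ _).trans
      (Finset.sum_le_card_nsmul _ _ δ fun i hi => hab i (Finset.mem_range.1 hi))
  rcases n.eq_zero_or_pos with rfl | hn
  · simpa using hδ
  · rwa [inv_mul_le_iff₀ (by positivity)]

theorem abs_cesaro_integral_sub_le_of_abs_sub_le {X : Type*} [TopologicalSpace X]
    [CompactSpace X] [MeasurableSpace X] [OpensMeasurableSpace X] (μ : ℕ → Measure X)
    (hμ : ∀ i, IsProbabilityMeasure (μ i)) (ν : Measure X) [IsProbabilityMeasure ν]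
    {f g : X → ℝ} (hf : Continuous f) (hg : Continuous g) {δ : ℝ} (hδ : 0 ≤ δ)
    (hfg : ∀ x, |f x - g x| ≤ δ) (n : ℕ) :
    |(n : ℝ)⁻¹ * ∑ i ∈ Finset.range n, ∫ x, f x ∂μ i - ∫ x, f x ∂ν|
      ≤ |(n : ℝ)⁻¹ * ∑ i ∈ Finset.range n, ∫ x, g x ∂μ i - ∫ x, g x ∂ν| + 2 * δ := by
  have hcesaro := abs_cesaro_sub_cesaro_le hδ n fun i _ =>
    abs_integral_sub_integral_le (μ i) hf hg hfg
  have hlimit := abs_integral_sub_integral_le ν hf hg hfg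
  rw [abs_sub_comm] at hlimit
  linarith [abs_sub_le ((n : ℝ)⁻¹ * ∑ i ∈ Finset.range n, ∫ x, f x ∂μ i)
      ((n : ℝ)⁻¹ * ∑ i ∈ Finset.range n, ∫ x, g x ∂μ i) (∫ x, f x ∂ν),
    abs_sub_le ((n : ℝ)⁻¹ * ∑ i ∈ Finset.range n, ∫ x, g x ∂μ i) (∫ x, g x ∂ν) (∫ x, f x ∂ν)]

theorem tendsto_zero_of_forall_le_div_add {s : ℕ → ℝ} (hs : ∀ n, 0 ≤ s n)
    (h : ∀ ε > 0, ∃ C, ∀ n ≥ 1, s n ≤ C / n + ε) : Tendsto s atTop (𝓝 0) := by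
  refine tendsto_order.2 ⟨fun a ha => .of_forall fun n => ha.trans_le (hs n), fun b hb => ?_⟩
  obtain ⟨C, hC⟩ := h (b / 2) (half_pos hb)
  filter_upwards [(tendsto_const_div_atTop_nhds_zero_nat C).eventually (gt_mem_nhds (half_pos hb)),
    eventually_ge_atTop 1] with n hCn hn
  linarith [hC n hn]

theorem uniform_shift_cesaro_convergence_general {X : Type*} [MetricSpace X] [CompactSpace X]
    [MeasurableSpace X] [BorelSpace X]
    (K : X → Measure X) (hKprob : ∀ x, IsProbabilityMeasure (K x)) (hKmeas : Measurable K)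
    (νinv : Measure X) [IsProbabilityMeasure νinv]
    (hLip : ∀ f : X → ℝ, (∃ L : NNReal, LipschitzWith L f) →
      ∃ C > (0 : ℝ), ∀ ν : Measure X, IsProbabilityMeasure ν → ∀ n : ℕ, 1 ≤ n →
        |(n : ℝ)⁻¹ * (∑ i ∈ Finset.range n, ∫ y, f y ∂(iterKer K i ν)) - ∫ y, f y ∂νinv|
          ≤ C / n)
    (h : X → ℝ) (hh : Continuous h) :
    Filter.Tendsto
      (fun n : ℕ => ⨆ x : X, ⨆ j : ℕ,
        |(n : ℝ)⁻¹ * (∑ i ∈ Finset.range n, ∫ y, h y ∂(iterKer K (j + i) (Measure.dirac x)))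
          - ∫ y, h y ∂νinv|)
      Filter.atTop (nhds 0) := by
  refine tendsto_zero_of_forall_le_div_add
    (fun n => Real.iSup_nonneg fun x => Real.iSup_nonneg fun j => abs_nonneg _) fun ε hε => ?_
  obtain ⟨f, L, hfL, hhf⟩ := exists_lipschitzWith_abs_sub_le hh (half_pos hε)
  obtain ⟨C, hC, hCf⟩ := hLip f ⟨L, hfL⟩
  refine ⟨C, fun n hn =>
    Real.iSup_le (fun x => Real.iSup_le (fun j => ?_) (by positivity)) (by positivity)⟩
  have hν := isProbabilityMeasure_iterKer_s13 hKprob hKmeas j (Measure.dirac x)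
  simp_rw [← iterKer_iterKer K _ j]
  calc _ ≤ _ + 2 * (ε / 2) := abs_cesaro_integral_sub_le_of_abs_sub_le _
        (fun i => isProbabilityMeasure_iterKer_s13 hKprob hKmeas i _) νinv hh hfL.continuous
        (half_pos hε).le hhf n
    _ ≤ C / n + ε := by linarith [hCf _ hν n hn]

/-- If the Cesàro averages of `νΠ^k` converge to `ν_inv` at rate `C/n`
uniformly in `ν` for every Lipschitz test function, then for every continuous `h` the
uniform-in-shift convergence holds:
`lim_n sup_{x̂} sup_{j≥0} |(1/n) E_x̂[∑_{i=1}^n h(x̂_{j+i−1})] − E_{ν_inv}(h)| = 0`. -/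
theorem uniform_shift_cesaro_convergence {X : Type*} [MetricSpace X] [CompactSpace X]
    [MeasurableSpace X] [BorelSpace X]
    (K : X → Measure X) (hKprob : ∀ x, IsProbabilityMeasure (K x)) (hKmeas : Measurable K)
    (hFeller : ∀ f : X → ℝ, Continuous f → Continuous fun x => ∫ y, f y ∂(K x))
    (νinv : Measure X) [IsProbabilityMeasure νinv]
    (hLip : ∀ f : X → ℝ, (∃ L : NNReal, LipschitzWith L f) →
      ∃ C > (0 : ℝ), ∀ ν : Measure X, IsProbabilityMeasure ν → ∀ n : ℕ, 1 ≤ n →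
        |(n : ℝ)⁻¹ * (∑ i ∈ Finset.range n, ∫ y, f y ∂(iterKer K i ν)) - ∫ y, f y ∂νinv|
          ≤ C / n)
    (h : X → ℝ) (hh : Continuous h) :
    Filter.Tendsto
      (fun n : ℕ => ⨆ x : X, ⨆ j : ℕ,
        |(n : ℝ)⁻¹ * (∑ i ∈ Finset.range n, ∫ y, h y ∂(iterKer K (j + i) (Measure.dirac x)))
          - ∫ y, h y ∂νinv|)
      Filter.atTop (nhds 0) :=
  uniform_shift_cesaro_convergence_general K hKprob hKmeas νinv hLip h hh
end

section
/- In the Keep-Switch model, for g = 1_{{ê_a, ê_b}} one has E_{ν_inv}(g) = 1, yet for every x̂ ∈ P(ℂ²) \ {ê_a, ê_b} and every n, S_n(g) = ∑_{k=0}^{n−1} g(x̂_k) = 0 P_x̂-almost surely; hence the law of large numbers fails for this L¹(ν_inv) function. -/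
open MeasureTheory

noncomputable instance projTop :
    TopologicalSpace (Projectivization ℂ (EuclideanSpace ℂ (Fin 2))) :=
  instTopologicalSpaceQuotient

noncomputable instance projMS : MeasurableSpace (Projectivization ℂ (EuclideanSpace ℂ (Fin 2))) :=
  borel _

instance projBorel : BorelSpace (Projectivization ℂ (EuclideanSpace ℂ (Fin 2))) :=
  ⟨rfl⟩

/-- Keep operator `A₁ = diag(√p, √q)`, `q = 1 − p`. -/
noncomputable def A1 (p : ℝ) : Matrix (Fin 2) (Fin 2) ℂ :=
  !![(Real.sqrt p : ℂ), 0; 0, (Real.sqrt (1 - p) : ℂ)]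

/-- Switch operator `A₂ = antidiag(√p, √q)`, `q = 1 − p`. -/
noncomputable def A2 (p : ℝ) : Matrix (Fin 2) (Fin 2) ℂ :=
  !![0, (Real.sqrt p : ℂ); (Real.sqrt (1 - p) : ℂ), 0]

noncomputable def ea : EuclideanSpace ℂ (Fin 2) := EuclideanSpace.single 0 1
noncomputable def eb : EuclideanSpace ℂ (Fin 2) := EuclideanSpace.single 1 1

lemma ea_ne : ea ≠ 0 := by
  intro h
  have := congrArg (fun v => v 0) h
  simp [ea, EuclideanSpace.single_apply] at this

lemma eb_ne : eb ≠ 0 := by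
  intro h
  have := congrArg (fun v => v 1) h
  simp [eb, EuclideanSpace.single_apply] at this

/-- `ê_a`, the projective class of the first standard basis vector. -/
noncomputable def eahat : Projectivization ℂ (EuclideanSpace ℂ (Fin 2)) :=
  Projectivization.mk ℂ ea ea_ne

/-- `ê_b`, the projective class of the second standard basis vector. -/
noncomputable def ebhat : Projectivization ℂ (EuclideanSpace ℂ (Fin 2)) :=
  Projectivization.mk ℂ eb eb_ne

/-- A unit-norm representative of a point of `P(ℂ²)`. -/
noncomputable def unitRep (x : Projectivization ℂ (EuclideanSpace ℂ (Fin 2))) :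
    EuclideanSpace ℂ (Fin 2) := ‖x.rep‖⁻¹ • x.rep

/-- The projective action `A · x̂` (extended arbitrarily when `A x = 0`). -/
noncomputable def mact (A : Matrix (Fin 2) (Fin 2) ℂ)
    (x : Projectivization ℂ (EuclideanSpace ℂ (Fin 2))) :
    Projectivization ℂ (EuclideanSpace ℂ (Fin 2)) :=
  if h : (WithLp.toLp 2 (A.mulVec (unitRep x)) : EuclideanSpace ℂ (Fin 2)) ≠ 0 then
    Projectivization.mk ℂ (WithLp.toLp 2 (A.mulVec (unitRep x))) h else x

/-- The Keep-Switch quantum trajectory kernel: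
`Π(x̂, ·) = ‖A₁x‖² δ_{A₁·x̂} + ‖A₂x‖² δ_{A₂·x̂}`. -/
noncomputable def ksKernel (p : ℝ) (x : Projectivization ℂ (EuclideanSpace ℂ (Fin 2))) :
    Measure (Projectivization ℂ (EuclideanSpace ℂ (Fin 2))) :=
  ENNReal.ofReal (‖((A1 p).mulVec (unitRep x) : Fin 2 → ℂ)‖ ^ 2) •
      Measure.dirac (mact (A1 p) x)
    + ENNReal.ofReal (‖((A2 p).mulVec (unitRep x) : Fin 2 → ℂ)‖ ^ 2) •
      Measure.dirac (mact (A2 p) x)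

/-! Keep and Switch are diagonal and antidiagonal with nonzero entries, so both map a vector
with two nonzero coordinates to another such vector. Hence the complement of `{ê_a, ê_b}` is
absorbing for the trajectory kernel, and the law of `x̂_k` started off `{ê_a, ê_b}` never charges
`{ê_a, ê_b}`, the support of `g`. On the other hand `ν_inv` lives on `{ê_a, ê_b}`, so
`E_{ν_inv}(g) = p + q = 1`. -/

theorem Projectivization.t1Space_quotient {𝕜 V : Type*} [NontriviallyNormedField 𝕜]
    [CompleteSpace 𝕜] [NormedAddCommGroup V] [NormedSpace 𝕜 V] [FiniteDimensional 𝕜 V] :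
    @T1Space (Projectivization 𝕜 V) instTopologicalSpaceQuotient := by
  let _ : TopologicalSpace (Projectivization 𝕜 V) := instTopologicalSpaceQuotient
  refine ⟨fun x =>
    (isQuotientMap_quotient_mk' (s := projectivizationSetoid 𝕜 V)).isClosed_preimage.1 ?_⟩
  have fiber_eq : Projectivization.mk' 𝕜 ⁻¹' {x} =
      Subtype.val ⁻¹' ((𝕜 ∙ x.rep : Submodule 𝕜 V) : Set V) := by
    ext ⟨w, hw⟩
    change Projectivization.mk 𝕜 w hw = x ↔ w ∈ 𝕜 ∙ x.rep
    conv_lhs => rw [← x.mk_rep]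
    rw [Projectivization.mk_eq_mk_iff', Submodule.mem_span_singleton]
  change IsClosed (Projectivization.mk' 𝕜 ⁻¹' {x})
  rw [fiber_eq]
  exact (Submodule.closed_of_finiteDimensional _).preimage continuous_subtype_val

theorem Projectivization.mk_eq_mk_single_iff {𝕜 ι : Type*} [RCLike 𝕜] [Fintype ι]
    [DecidableEq ι] (v : EuclideanSpace 𝕜 ι) (hv : v ≠ 0) (i : ι)
    (hi : EuclideanSpace.single i (1 : 𝕜) ≠ 0) :
    Projectivization.mk 𝕜 v hv = Projectivization.mk 𝕜 (EuclideanSpace.single i 1) hi ↔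
      ∀ j ≠ i, v j = 0 := by
  rw [Projectivization.mk_eq_mk_iff']
  constructor
  · rintro ⟨a, rfl⟩ j hj
    simp [hj]
  · intro h
    refine ⟨v i, ?_⟩
    ext j
    by_cases hj : j = i
    · subst hj; simp
    · simp [hj, h j hj]

theorem Measure.bind_apply_eq_zero_of_forall_notMem {X : Type*} [MeasurableSpace X]
    {μ : Measure X} {K : X → Measure X} {S : Set X} (hS : MeasurableSet S) (hμ : μ S = 0)
    (hK : ∀ a ∉ S, K a S = 0) : μ.bind K S = 0 := by
  refine nonpos_iff_eq_zero.1 ((Measure.bind_apply_le K hS).trans_eq ?_)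
  refine lintegral_eq_zero_of_ae_eq_zero ?_
  filter_upwards [measure_eq_zero_iff_ae_notMem.mp hμ] with a ha using hK a ha

theorem iterKer_apply_eq_zero {X : Type*} [MeasurableSpace X] {K : X → Measure X}
    {ν : Measure X} {S : Set X} (hS : MeasurableSet S) (hν : ν S = 0)
    (hK : ∀ a ∉ S, K a S = 0) (n : ℕ) : iterKer K n ν S = 0 := by
  induction n with
  | zero => exact hν
  | succ n ih => exact Measure.bind_apply_eq_zero_of_forall_notMem hS ih hK

theorem integral_indicator_one_smul_dirac_add_smul_dirac {X : Type*} [MeasurableSpace X]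
    {S : Set X} (hS : MeasurableSet S) {a b : X} (ha : a ∈ S) (hb : b ∈ S) {p : ℝ}
    (hp0 : 0 ≤ p) (hp1 : p ≤ 1) :
    ∫ x, S.indicator (1 : X → ℝ) x
      ∂(ENNReal.ofReal p • Measure.dirac a + ENNReal.ofReal (1 - p) • Measure.dirac b) = 1 := by
  rw [integral_indicator_one hS, Measure.real, Measure.add_apply, Measure.smul_apply,
    Measure.smul_apply, Measure.dirac_apply_of_mem ha, Measure.dirac_apply_of_mem hb,
    smul_eq_mul, smul_eq_mul, mul_one, mul_one, ← ENNReal.ofReal_add hp0 (by linarith)]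
  simp

section KeepSwitch

open scoped Matrix

local notation "PE" => Projectivization ℂ (EuclideanSpace ℂ (Fin 2))

instance : T1Space PE := Projectivization.t1Space_quotient

theorem mk_mem_eahat_ebhat_iff (v : EuclideanSpace ℂ (Fin 2)) (hv : v ≠ 0) :
    Projectivization.mk ℂ v hv ∈ ({eahat, ebhat} : Set PE) ↔ v 1 = 0 ∨ v 0 = 0 := by
  simp [eahat, ebhat, ea, eb, Projectivization.mk_eq_mk_single_iff, Fin.forall_fin_two]

theorem unitRep_ne_zero (x : PE) : unitRep x ≠ 0 :=
  smul_ne_zero (inv_ne_zero (norm_ne_zero_iff.mpr x.rep_nonzero)) x.rep_nonzero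

theorem mk_unitRep (x : PE) : Projectivization.mk ℂ (unitRep x) (unitRep_ne_zero x) = x := by
  conv_rhs => rw [← x.mk_rep]
  exact (Projectivization.mk_eq_mk_iff' ℂ _ _ _ _).2
    ⟨(‖x.rep‖⁻¹ : ℝ), by rw [Complex.coe_smul]; rfl⟩

theorem notMem_eahat_ebhat_iff (x : PE) :
    x ∉ ({eahat, ebhat} : Set PE) ↔ unitRep x 0 ≠ 0 ∧ unitRep x 1 ≠ 0 := by
  conv_lhs => rw [← mk_unitRep x, mk_mem_eahat_ebhat_iff]
  tauto

theorem mact_notMem_eahat_ebhat {A : Matrix (Fin 2) (Fin 2) ℂ}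
    (hA : ∀ v : Fin 2 → ℂ, v 0 ≠ 0 → v 1 ≠ 0 → (A *ᵥ v) 0 ≠ 0 ∧ (A *ᵥ v) 1 ≠ 0)
    {x : PE} (hx : x ∉ ({eahat, ebhat} : Set PE)) :
    mact A x ∉ ({eahat, ebhat} : Set PE) := by
  rw [notMem_eahat_ebhat_iff] at hx
  obtain ⟨h0, h1⟩ := hA _ hx.1 hx.2
  have hne : (WithLp.toLp 2 (A *ᵥ unitRep x) : EuclideanSpace ℂ (Fin 2)) ≠ 0 :=
    fun h => h0 (congrArg (fun v : EuclideanSpace ℂ (Fin 2) => v 0) h)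
  rw [mact, dif_pos hne, mk_mem_eahat_ebhat_iff]
  exact not_or.2 ⟨h1, h0⟩

variable {p : ℝ}

theorem A1_mulVec_apply_ne_zero (hp0 : 0 < p) (hp1 : p < 1) {v : Fin 2 → ℂ} (h0 : v 0 ≠ 0)
    (h1 : v 1 ≠ 0) : (A1 p *ᵥ v) 0 ≠ 0 ∧ (A1 p *ᵥ v) 1 ≠ 0 := by
  simp [A1, Matrix.mulVec, dotProduct, Fin.sum_univ_two, Real.sqrt_eq_zero', hp0, hp1, h0, h1]

theorem A2_mulVec_apply_ne_zero (hp0 : 0 < p) (hp1 : p < 1) {v : Fin 2 → ℂ} (h0 : v 0 ≠ 0)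
    (h1 : v 1 ≠ 0) : (A2 p *ᵥ v) 0 ≠ 0 ∧ (A2 p *ᵥ v) 1 ≠ 0 := by
  simp [A2, Matrix.mulVec, dotProduct, Fin.sum_univ_two, Real.sqrt_eq_zero', hp0, hp1, h0, h1]

theorem ksKernel_apply_eahat_ebhat (hp0 : 0 < p) (hp1 : p < 1) {x : PE}
    (hx : x ∉ ({eahat, ebhat} : Set PE)) : ksKernel p x {eahat, ebhat} = 0 := by
  have keep := mact_notMem_eahat_ebhat (fun _ => A1_mulVec_apply_ne_zero hp0 hp1) hx
  have switch := mact_notMem_eahat_ebhat (fun _ => A2_mulVec_apply_ne_zero hp0 hp1) hx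
  simp [ksKernel, Set.indicator_of_notMem keep, Set.indicator_of_notMem switch]

end KeepSwitch

/-- In the Keep-Switch model, for `g = 1_{{ê_a, ê_b}}` one has
`E_{ν_inv}(g) = 1`, yet for every `x̂ ∉ {ê_a, ê_b}` and every time `k`, `g(x̂_k) = 0`
`P_x̂`-a.s. (hence `S_n(g) = 0` a.s. for every `n`): the LLN fails for this `L¹(ν_inv)`
function. -/
theorem keepSwitch_lln_fails (p : ℝ) (hp0 : 0 < p) (hp : p < 1 / 2)
    (g : Projectivization ℂ (EuclideanSpace ℂ (Fin 2)) → ℝ)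
    (hgdef : g = Set.indicator
      ({eahat, ebhat} : Set (Projectivization ℂ (EuclideanSpace ℂ (Fin 2))))
      (fun _ => (1 : ℝ))) :
    (∫ x, g x ∂(ENNReal.ofReal p • Measure.dirac eahat
        + ENNReal.ofReal (1 - p) • Measure.dirac ebhat) = 1) ∧
    (∀ x : Projectivization ℂ (EuclideanSpace ℂ (Fin 2)),
      x ∉ ({eahat, ebhat} : Set (Projectivization ℂ (EuclideanSpace ℂ (Fin 2)))) →
      ∀ k : ℕ, iterKer (ksKernel p) k (Measure.dirac x) {y | g y ≠ 0} = 0) := by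
  have hp1 : p < 1 := by linarith
  have hS : MeasurableSet ({eahat, ebhat} : Set _) :=
    (measurableSet_singleton ebhat).insert eahat
  subst hgdef
  have support_g : {y | ({eahat, ebhat} : Set _).indicator (fun _ => (1 : ℝ)) y ≠ 0} =
      {eahat, ebhat} := by
    rw [← Function.support, Set.support_indicator, Function.support_const one_ne_zero,
      Set.inter_univ]
  refine ⟨integral_indicator_one_smul_dirac_add_smul_dirac hS (by simp) (by simp) hp0.le hp1.le,
    fun x hx k => ?_⟩
  rw [support_g]
  exact iterKer_apply_eq_zero hS (by simpa using hx)
    (fun _ ha => ksKernel_apply_eahat_ebhat hp0 hp1 ha) k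
end
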